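/- For every real β, every real y, and every integer n ≥ 0, one has Σ_{p+q=n, p,q≥0} a_p · H̃_q(β − y) = P_n(−y − β). -/

import Mathlib

/-- Physicists' Hermite polynomial `H_n` at a real argument:
`H_n(x) = n! · Σ_{m=0}^{⌊n/2⌋} (−1)^m (2x)^{n−2m} / (m!(n−2m)!)`. -/
noncomputable def HR (n : ℕ) (x : ℝ) : ℝ :=
  (n.factorial : ℝ) * ∑ m ∈ Finset.range (n / 2 + 1),
    (-1 : ℝ) ^ m * (2 * x) ^ (n - 2 * m) / ((m.factorial : ℝ) * ((n - 2 * m).factorial : ℝ))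

/-- Normalized Hermite polynomial `H̃_n(x) = H_n(x)/n!` at a real argument. -/
noncomputable def HtR (n : ℕ) (x : ℝ) : ℝ := HR n x / (n.factorial : ℝ)

/-- Complex normalized Hermite polynomial, used to define `P_n`. -/
noncomputable def HtC (n : ℕ) (x : ℂ) : ℂ :=
  ((n.factorial : ℂ) * ∑ m ∈ Finset.range (n / 2 + 1),
    (-1 : ℂ) ^ m * (2 * x) ^ (n - 2 * m) / ((m.factorial : ℂ) * ((n - 2 * m).factorial : ℂ)))
    / (n.factorial : ℂ)

/-- The real polynomial `P_n`, determined by `P_n(x) = i^{−n}·H̃_n(i x)` (which is real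
for real `x`). -/
noncomputable def PR (n : ℕ) (x : ℝ) : ℝ :=
  (Complex.I ^ (-(n : ℤ)) * HtC n (Complex.I * x)).re

/-- `c_k = 2^{k/2}·H̃_k(β√2)`. -/
noncomputable def cR (β : ℝ) (k : ℕ) : ℝ := Real.sqrt 2 ^ k * HtR k (β * Real.sqrt 2)

/-- `a_k = 2^{k/2}·(−1)^k·P_k(β√2)`. -/
noncomputable def aR (β : ℝ) (k : ℕ) : ℝ := Real.sqrt 2 ^ k * (-1) ^ k * PR k (β * Real.sqrt 2)

/-! `H̃_n(x)`, `P_n(x)` and `a_n` are the Taylor coefficients of `exp (2xt - t²)`, `exp (2xt + t²)`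
and `exp (-4βt + 2t²)`: the last two arise from rescaling `t ↦ -i t` in the first and
`t ↦ -√2 t` in the second. The generating functions of `a` and of `H̃(β - y)` multiply to
`exp (2(-y - β)t + t²)`, the generating function of `P(-y - β)`. -/

open PowerSeries Finset

theorem PowerSeries.coeff_mul_expand {R : Type*} [CommRing R] (k : ℕ) (hk : k ≠ 0)
    (A B : R⟦X⟧) (n : ℕ) :
    coeff n (A * expand k hk B) = ∑ m ∈ range (n / k + 1), coeff (n - k * m) A * coeff m B := by
  have hpos : 0 < k := Nat.pos_of_ne_zero hk
  have hrange : ∀ m, m ∈ range (n / k + 1) ↔ k * m ≤ n := fun m => by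
    rw [mem_range, Nat.lt_succ_iff, Nat.le_div_iff_mul_le hpos, mul_comm]
  have hinj : Set.InjOn (fun m => (n - k * m, k * m)) (range (n / k + 1)) :=
    fun m _ m' _ h => Nat.eq_of_mul_eq_mul_left hpos (congrArg Prod.snd h)
  rw [coeff_mul, ← sum_subset (s₁ := (range (n / k + 1)).image fun m => (n - k * m, k * m)),
    sum_image hinj]
  · simp only [coeff_expand_mul]
  · intro p hp
    simp only [mem_image, hrange, HasAntidiagonal.mem_antidiagonal] at hp ⊢
    obtain ⟨m, hm, rfl⟩ := hp
    exact Nat.sub_add_cancel hm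
  · intro p hp hp'
    rw [coeff_expand_of_not_dvd, mul_zero]
    rintro ⟨m, hm⟩
    simp only [mem_image, hrange, HasAntidiagonal.mem_antidiagonal, not_exists, not_and] at hp hp'
    exact hp' m (by omega) (Prod.ext (by omega) hm.symm)

section

variable {K : Type*} [Field K]

/-- The coefficient of `t ^ n` in `exp (a t + b t ^ 2)`, i.e. the two-variable
(Kampé de Fériet) Hermite polynomial `H_n(a, b) / n!`. -/
noncomputable def hermiteKF (a b : K) (n : ℕ) : K :=
  ∑ m ∈ range (n / 2 + 1), b ^ m * a ^ (n - 2 * m) / ((m.factorial : K) * ((n - 2 * m).factorial : K))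

theorem hermiteKF_mul_mul_sq (c a b : K) (n : ℕ) :
    hermiteKF (c * a) (c ^ 2 * b) n = c ^ n * hermiteKF a b n := by
  rw [hermiteKF, hermiteKF, mul_sum]
  refine sum_congr rfl fun m hm => ?_
  have hmn : 2 * m ≤ n := by simp only [mem_range] at hm; omega
  rw [← mul_div_assoc]
  congr 1
  calc (c ^ 2 * b) ^ m * (c * a) ^ (n - 2 * m)
      = c ^ (2 * m + (n - 2 * m)) * (b ^ m * a ^ (n - 2 * m)) := by ring
    _ = c ^ n * (b ^ m * a ^ (n - 2 * m)) := by rw [Nat.add_sub_cancel' hmn]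

theorem map_hermiteKF {L : Type*} [Field L] (f : K →+* L) (a b : K) (n : ℕ) :
    f (hermiteKF a b n) = hermiteKF (f a) (f b) n := by
  simp [hermiteKF]

variable [CharZero K]

noncomputable def expQuad (a b : K) : K⟦X⟧ :=
  rescale a (exp K) * expand 2 two_ne_zero (rescale b (exp K))

theorem coeff_expQuad (a b : K) (n : ℕ) : coeff n (expQuad a b) = hermiteKF a b n := by
  rw [expQuad, coeff_mul_expand, hermiteKF]
  refine sum_congr rfl fun m _ => ?_
  simp only [coeff_rescale, coeff_exp, one_div, map_inv₀, map_natCast]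
  ring

theorem expQuad_mul_expQuad (a b a' b' : K) :
    expQuad a b * expQuad a' b' = expQuad (a + a') (b + b') := by
  rw [expQuad, expQuad, expQuad, mul_mul_mul_comm, exp_mul_exp_eq_exp_add, ← map_mul,
    exp_mul_exp_eq_exp_add]

theorem sum_antidiagonal_hermiteKF_mul (a b a' b' : K) (n : ℕ) :
    ∑ p ∈ antidiagonal n, hermiteKF a b p.1 * hermiteKF a' b' p.2 =
      hermiteKF (a + a') (b + b') n := by
  simp only [← coeff_expQuad, ← coeff_mul, expQuad_mul_expQuad]

end

theorem HtR_eq_hermiteKF (n : ℕ) (x : ℝ) : HtR n x = hermiteKF (2 * x) (-1) n :=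
  mul_div_cancel_left₀ _ (Nat.cast_ne_zero.2 n.factorial_ne_zero)

theorem HtC_eq_hermiteKF (n : ℕ) (z : ℂ) : HtC n z = hermiteKF (2 * z) (-1) n :=
  mul_div_cancel_left₀ _ (Nat.cast_ne_zero.2 n.factorial_ne_zero)

theorem PR_eq_hermiteKF (n : ℕ) (x : ℝ) : PR n x = hermiteKF (2 * x) 1 n := by
  have hcast := map_hermiteKF Complex.ofRealHom (2 * x) 1 n
  simp only [Complex.ofRealHom_eq_coe] at hcast
  have h : HtC n (Complex.I * x) = Complex.I ^ n * ((hermiteKF (2 * x) 1 n : ℝ) : ℂ) := by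
    rw [HtC_eq_hermiteKF, hcast, ← hermiteKF_mul_mul_sq]
    congr 1
    · push_cast
      ring
    · simp
  rw [PR, h, zpow_neg, zpow_natCast, inv_mul_cancel_left₀ (pow_ne_zero _ Complex.I_ne_zero),
    Complex.ofReal_re]

theorem aR_eq_hermiteKF (β : ℝ) (k : ℕ) : aR β k = hermiteKF (-4 * β) 2 k :=
  calc aR β k = (-√2) ^ k * hermiteKF (2 * (β * √2)) 1 k := by
        rw [aR, PR_eq_hermiteKF, neg_pow √2, mul_comm ((-1 : ℝ) ^ k)]
    _ = hermiteKF (-√2 * (2 * (β * √2))) ((-√2) ^ 2 * 1) k := (hermiteKF_mul_mul_sq ..).symm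
    _ = hermiteKF (-4 * β) 2 k := by
        have hsq : √2 ^ 2 = 2 := Real.sq_sqrt zero_le_two
        congr 1
        · linear_combination (-2 * β) * hsq
        · linear_combination hsq

/-- `Σ_{p+q=n} a_p · H̃_q(β − y) = P_n(−y − β)`. -/
theorem hermite_a_H_sum (β y : ℝ) (n : ℕ) :
    ∑ p ∈ Finset.HasAntidiagonal.antidiagonal n, aR β p.1 * HtR p.2 (β - y) = PR n (-y - β) := by
  simp only [aR_eq_hermiteKF, HtR_eq_hermiteKF, PR_eq_hermiteKF]
  convert sum_antidiagonal_hermiteKF_mul (-4 * β) 2 (2 * (β - y)) (-1) n using 2 <;> ring
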